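/- arXiv:0905.3348 — 4 statements merged into one kernel-verified Lean document; each statement's English description precedes it below -/
import Mathlib

section
/- Let v = [q; w_1,...,w_n] be a WVG and let v' be obtained from v by splitting player i of weight w_i into two players i' and i'' with positive weights w_{i'} + w_{i''} = w_i. Then η_{i'}(v') + η_{i''}(v') = 2·η_i(v). -/
open scoped Classical

section WVG

variable {α : Type*} [Fintype α] [DecidableEq α]

/-- A coalition `S` is winning in the WVG with quota `q` and weights `w`
iff its total weight is at least the quota. -/
def winning (q : ℕ) (w : α → ℕ) (S : Finset α) : Prop :=
  q ≤ ∑ j ∈ S, w j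

/-- `eta q w i` is the number of coalitions containing `i` that are winning
and become losing when `i` is removed (the raw Banzhaf count of `i`). -/
noncomputable def eta (q : ℕ) (w : α → ℕ) (i : α) : ℕ :=
  (Finset.univ.filter fun S : Finset α =>
    i ∈ S ∧ winning q w S ∧ ¬ winning q w (S.erase i)).card

/-- Total raw Banzhaf count over all players. -/
noncomputable def totalEta (q : ℕ) (w : α → ℕ) : ℕ :=
  ∑ i, eta q w i

/-- Banzhaf index of player `i`. -/
noncomputable def banzhaf (q : ℕ) (w : α → ℕ) (i : α) : ℚ :=
  (eta q w i : ℚ) / (totalEta q w : ℚ)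

/-- Shapley-Shubik index of player `i`. -/
noncomputable def shapley (q : ℕ) (w : α → ℕ) (i : α) : ℚ :=
  ∑ S ∈ (Finset.univ.filter fun S : Finset α =>
      i ∈ S ∧ winning q w S ∧ ¬ winning q w (S.erase i)),
    ((S.card - 1).factorial * (Fintype.card α - S.card).factorial : ℚ) /
      ((Fintype.card α).factorial : ℚ)

end WVG

/-
Fix a coalition `T` of the remaining players, of weight `s`. Player `i` is pivotal in
`T ∪ {i}` iff `q ∈ (s, s + w i]`. The half `i'` of weight `a` is pivotal in `T ∪ {i'}` iff
`q ∈ (s, s + a]` and in `T ∪ {i', i''}` iff `q ∈ (s + b, s + b + a]`; symmetrically for `i''`.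
These four intervals tile `(s, s + a + b]` twice.
-/

open Finset

namespace Finset

theorem powerset_map {β γ : Type*} (e : β ↪ γ) (U : Finset β) :
    (U.map e).powerset = U.powerset.map (mapEmbedding e).toEmbedding := by
  ext T
  simp [subset_map_iff, eq_comm]

theorem card_filter_powerset_map {β γ : Type*} (e : β ↪ γ) (U : Finset β)
    (p : Finset γ → Prop) [DecidablePred p] :
    #{T ∈ (U.map e).powerset | p T} = #{T ∈ U.powerset | p (T.map e)} := by
  rw [powerset_map, filter_map, card_map]
  rfl

theorem card_filter_powerset_insert {β : Type*} [DecidableEq β] {U : Finset β} {k : β}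
    (hk : k ∉ U) (p : Finset β → Prop) [DecidablePred p] :
    #{T ∈ (insert k U).powerset | p T} =
      #{T ∈ U.powerset | p T} + #{T ∈ U.powerset | p (insert k T)} := by
  simp only [card_filter, sum_powerset_insert hk]

theorem card_filter_Ioc_add_card_filter_Ioc {ι : Type*} (F : Finset ι) (s : ι → ℕ)
    (q a b : ℕ) :
    #{x ∈ F | s x < q ∧ q ≤ s x + a} + #{x ∈ F | s x + a < q ∧ q ≤ s x + a + b} =
      #{x ∈ F | s x < q ∧ q ≤ s x + (a + b)} := by
  rw [← card_union_of_disjoint, ← filter_or]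
  · exact congrArg card (filter_congr fun x _ => by omega)
  · exact disjoint_filter.2 fun x _ _ => by omega

end Finset

section Pivotal

variable {α : Type*} [Fintype α] [DecidableEq α]

theorem eta_eq_card_filter_powerset (q : ℕ) (w : α → ℕ) (i : α) :
    eta q w i =
      #{T ∈ (univ.erase i).powerset | ∑ j ∈ T, w j < q ∧ q ≤ ∑ j ∈ T, w j + w i} := by
  have hi : i ∉ univ.erase i := notMem_erase i univ
  have huniv : (univ : Finset (Finset α)) = (insert i (univ.erase i)).powerset := by
    rw [insert_erase (mem_univ i), powerset_univ]
  rw [eta, huniv, card_filter_powerset_insert hi, filter_false_of_mem, card_empty, zero_add]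
  · refine congrArg card (filter_congr fun T hT => ?_)
    have hiT : i ∉ T := fun h => hi (mem_powerset.1 hT h)
    simp only [winning, mem_insert_self, true_and, sum_insert hiT, erase_insert hiT]
    omega
  · exact fun T hT h => hi (mem_powerset.1 hT h.1)

theorem eta_eq_card_add_card_of_ne (q : ℕ) (w : α → ℕ) {j k : α} (hjk : j ≠ k) :
    eta q w j =
      #{T ∈ ((univ.erase j).erase k).powerset |
          ∑ x ∈ T, w x < q ∧ q ≤ ∑ x ∈ T, w x + w j} +
      #{T ∈ ((univ.erase j).erase k).powerset |
          ∑ x ∈ T, w x + w k < q ∧ q ≤ ∑ x ∈ T, w x + w k + w j} := by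
  set U := (univ.erase j).erase k
  have hU : univ.erase j = insert k U :=
    (insert_erase (mem_erase.2 ⟨hjk.symm, mem_univ k⟩)).symm
  rw [eta_eq_card_filter_powerset, hU, card_filter_powerset_insert (notMem_erase k _)]
  congr 1
  refine congrArg card (filter_congr fun T hT => ?_)
  have hkT : k ∉ T := fun h => notMem_erase k _ (mem_powerset.1 hT h)
  rw [sum_insert hkT]
  omega

theorem eta_add_eta_of_ne (q : ℕ) (w : α → ℕ) {j k : α} (hjk : j ≠ k) :
    eta q w j + eta q w k =
      2 * #{T ∈ ((univ.erase j).erase k).powerset |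
          ∑ x ∈ T, w x < q ∧ q ≤ ∑ x ∈ T, w x + (w j + w k)} := by
  have hj := card_filter_Ioc_add_card_filter_Ioc ((univ.erase j).erase k).powerset
    (fun T => ∑ x ∈ T, w x) q (w j) (w k)
  have hk := card_filter_Ioc_add_card_filter_Ioc ((univ.erase j).erase k).powerset
    (fun T => ∑ x ∈ T, w x) q (w k) (w j)
  rw [add_comm (w k)] at hk
  rw [eta_eq_card_add_card_of_ne q w hjk, eta_eq_card_add_card_of_ne q w hjk.symm,
    erase_right_comm (a := k)]
  omega

end Pivotal

theorem split_eta_doubles_general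
    (α : Type*) [Fintype α] [DecidableEq α]
    (q : ℕ) (w : α → ℕ) (i : α) (a b : ℕ)
    (hab : a + b = w i)
    (w' : {x : α // x ≠ i} ⊕ Fin 2 → ℕ)
    (hw' : w' = Sum.elim (fun x : {x : α // x ≠ i} => w x.1) ![a, b]) :
    eta q w' (Sum.inr 0) + eta q w' (Sum.inr 1) = 2 * eta q w i := by
  have hsplit : (univ.erase (Sum.inr 0)).erase (Sum.inr (1 : Fin 2)) =
      (univ : Finset {x : α // x ≠ i}).map Function.Embedding.inl := by
    ext (x | x)
    · simp
    · fin_cases x <;> simp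
  have hothers : univ.erase i = univ.map (Function.Embedding.subtype (· ≠ i)) := by
    rw [univ_map_subtype, filter_ne']
  rw [eta_add_eta_of_ne q w' (Sum.inr_injective.ne zero_ne_one), eta_eq_card_filter_powerset,
    hsplit, hothers, card_filter_powerset_map, card_filter_powerset_map]
  subst hw'
  simp [sum_map, hab]

/-- If player `i` of weight `w i` splits into two players of positive weights
`a` and `b` with `a + b = w i`, the raw Banzhaf counts of the two sub-players
sum to twice the raw Banzhaf count of `i`. -/
theorem split_eta_doubles
    (α : Type*) [Fintype α] [DecidableEq α]
    (q : ℕ) (w : α → ℕ) (i : α) (a b : ℕ) (ha : 0 < a) (hb : 0 < b)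
    (hab : a + b = w i)
    (w' : {x : α // x ≠ i} ⊕ Fin 2 → ℕ)
    (hw' : w' = Sum.elim (fun x : {x : α // x ≠ i} => w x.1) ![a, b]) :
    eta q w' (Sum.inr 0) + eta q w' (Sum.inr 1) = 2 * eta q w i :=
  split_eta_doubles_general α q w i a b hab w' hw'
end

section
/- Let v = [q; w_1,...,w_n] be a WVG and v' be obtained by splitting player i into two players i' and i'' with positive weights summing to w_i. Then for every player x ≠ i, η_x(v) ≤ η_x(v'). -/
open scoped Classical

/-! Send a coalition `S` of `v` to the coalition of `v'` in which `i` is replaced by both of its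
halves whenever `i ∈ S`. This map is injective, preserves weight and commutes with removing `x`,
so it sends the coalitions in which `x` is critical in `v` to coalitions in which `x` is critical
in `v'`. -/

theorem eta_le_eta_of_injective {α β : Type*} [Fintype α] [DecidableEq α] [Fintype β]
    [DecidableEq β] (q : ℕ) (w : α → ℕ) (w' : β → ℕ) (f : Finset α → Finset β)
    (hf : Function.Injective f) (hsum : ∀ S, ∑ z ∈ f S, w' z = ∑ j ∈ S, w j)
    (x : α) (y : β) (herase : ∀ S, (f S).erase y = f (S.erase x)) :
    eta q w x ≤ eta q w' y := by
  rw [eta, eta]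
  refine Finset.card_le_card_of_injOn f (fun S hS => ?_) hf.injOn
  rw [Finset.mem_coe, Finset.mem_filter] at hS ⊢
  simp only [Finset.mem_univ, true_and, winning] at hS ⊢
  obtain ⟨hxS, hwin, hlose⟩ := hS
  refine ⟨?_, by rwa [hsum], by rwa [herase, hsum]⟩
  by_contra hyS
  have hSx : S.erase x = S := hf (by rw [← herase, Finset.erase_eq_of_notMem hyS])
  exact Finset.erase_eq_self.mp hSx hxS

section Split

open Finset

variable {α ι : Type*} [DecidableEq α] [Fintype ι] (i : α)

def splitCoalition (S : Finset α) : Finset ({x : α // x ≠ i} ⊕ ι) :=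
  (S.subtype (· ≠ i)).disjSum (if i ∈ S then univ else ∅)

theorem sum_splitCoalition (w : α → ℕ) (u : ι → ℕ) (hu : ∑ k, u k = w i) (S : Finset α) :
    ∑ z ∈ splitCoalition i S, Sum.elim (fun x : {x : α // x ≠ i} => w x.1) u z
      = ∑ j ∈ S, w j := by
  rw [splitCoalition, sum_disjSum]
  simp only [Sum.elim_inl, Sum.elim_inr, sum_subtype_eq_sum_filter, filter_ne']
  by_cases hi : i ∈ S
  · rw [if_pos hi, hu, sum_erase_add S w hi]
  · rw [if_neg hi, sum_empty, add_zero, erase_eq_of_notMem hi]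

theorem splitCoalition_erase [DecidableEq ι] (x : α) (hx : x ≠ i) (S : Finset α) :
    (splitCoalition i S : Finset ({x : α // x ≠ i} ⊕ ι)).erase (Sum.inl ⟨x, hx⟩)
      = splitCoalition i (S.erase x) := by
  ext (y | k)
  · simp only [splitCoalition, mem_erase, inl_mem_disjSum, mem_subtype, ne_eq,
      Sum.inl.injEq, Subtype.ext_iff]
  · simp [splitCoalition, Ne.symm hx]

theorem splitCoalition_injective [Nonempty ι] :
    Function.Injective (splitCoalition i : Finset α → Finset ({x : α // x ≠ i} ⊕ ι)) := by
  intro S T hST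
  obtain ⟨k⟩ := ‹Nonempty ι›
  ext y
  by_cases hy : y = i
  · subst hy
    simpa [splitCoalition, apply_ite (k ∈ ·)] using congrArg (Sum.inr k ∈ ·) hST
  · simpa [splitCoalition] using congrArg (Sum.inl ⟨y, hy⟩ ∈ ·) hST

end Split

theorem split_eta_others_mono_general
    (α : Type*) [Fintype α] [DecidableEq α]
    (q : ℕ) (w : α → ℕ) (i : α) (a b : ℕ)
    (hab : a + b = w i)
    (w' : {x : α // x ≠ i} ⊕ Fin 2 → ℕ)
    (hw' : w' = Sum.elim (fun x : {x : α // x ≠ i} => w x.1) ![a, b]) :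
    ∀ (x : α) (hx : x ≠ i), eta q w x ≤ eta q w' (Sum.inl ⟨x, hx⟩) := by
  intro x hx
  subst hw'
  have hu : ∑ k, ![a, b] k = w i := by simpa [Fin.sum_univ_two] using hab
  exact eta_le_eta_of_injective q w _ (splitCoalition i) (splitCoalition_injective i)
    (sum_splitCoalition i w _ hu) x _ (splitCoalition_erase i x hx)

/-- If player `i` splits into two players of positive weights summing to `w i`,
the raw Banzhaf count of every other player does not decrease. -/
theorem split_eta_others_mono
    (α : Type*) [Fintype α] [DecidableEq α]
    (q : ℕ) (w : α → ℕ) (i : α) (a b : ℕ) (ha : 0 < a) (hb : 0 < b)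
    (hab : a + b = w i)
    (w' : {x : α // x ≠ i} ⊕ Fin 2 → ℕ)
    (hw' : w' = Sum.elim (fun x : {x : α // x ≠ i} => w x.1) ![a, b]) :
    ∀ (x : α) (hx : x ≠ i), eta q w x ≤ eta q w' (Sum.inl ⟨x, hx⟩) :=
  split_eta_others_mono_general α q w i a b hab w' hw'
end

section
/- Let v = [q; w_1,...,w_n] be a WVG and v' be the game obtained by splitting player i into two players i' and i'' with positive weights summing to w_i. Then β_{i'}(v') + β_{i''}(v') ≤ 2·β_i(v). -/
open scoped Classical

/-! A coalition `T` of the players other than `i` is a swing for `i` iff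
`∑ T < q ≤ ∑ T + w i`. After the split, the swings of `i'` are the coalitions `T` with
`∑ T < q ≤ ∑ T + a` together with the `T ∪ {i''}` with `∑ T + b < q ≤ ∑ T + b + a`;
adding the swings of `i''` covers the window `(∑ T, ∑ T + a + b]` exactly twice, so
`η_{i'} + η_{i''} = 2 η_i`. Every other player keeps all its swings, since preimages under
the map merging `i'` and `i''` back into `i` have the same weight. So the total count can
only grow, and dividing `2 η_i` by the larger total gives the bound. -/

open Finset

section Swings

variable {α β γ σ : Type*} [Fintype α] [DecidableEq α] [Fintype β] [DecidableEq β]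
  [Fintype γ] [DecidableEq γ] [Fintype σ]

def swingCount (q : ℕ) (f : σ → ℕ) (c : ℕ) : ℕ :=
  #{T | f T < q ∧ q ≤ f T + c}

theorem swingCount_add (q : ℕ) (f : σ → ℕ) (c d : ℕ) :
    swingCount q f c + swingCount q (f · + c) d = swingCount q f (c + d) := by
  rw [swingCount, swingCount, swingCount, ← card_union_of_disjoint, ← filter_or]
  · congr 1
    exact filter_congr fun T _ => by omega
  · exact disjoint_filter.2 fun T _ h h' => by omega

theorem eta_eq_card_notMem (q : ℕ) (w : α → ℕ) (i : α) :
    eta q w i = #{S | i ∉ S ∧ ∑ j ∈ S, w j < q ∧ q ≤ ∑ j ∈ S, w j + w i} := by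
  refine card_nbij' (fun S => S.erase i) (insert i) (fun S hS => ?_) (fun S hS => ?_)
    (fun S hS => ?_) (fun S hS => ?_) <;>
    simp only [mem_coe, mem_filter, mem_univ, true_and] at hS ⊢ <;> unfold winning at *
  · obtain ⟨hi, hwin, hlose⟩ := hS
    rw [← sum_erase_add _ _ hi] at hwin
    exact ⟨notMem_erase i S, by omega, hwin⟩
  · obtain ⟨hi, hlose, hwin⟩ := hS
    rw [sum_insert hi, erase_insert hi]
    exact ⟨mem_insert_self i S, by omega, by omega⟩
  · exact insert_erase hS.1
  · exact erase_insert hS.1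

theorem eta_comp_equiv (e : β ≃ α) (q : ℕ) (w : α → ℕ) (k : β) :
    eta q (w ∘ e) k = eta q w (e k) := by
  rw [eta_eq_card_notMem, eta_eq_card_notMem]
  exact card_equiv (Equiv.finsetCongr e) fun S => by simp [Equiv.finsetCongr_apply, sum_map]

theorem eta_sumElim_inr (q : ℕ) (u : β → ℕ) (g : γ → ℕ) (r : γ) :
    eta q (Sum.elim u g) (.inr r) =
      ∑ U : Finset γ with r ∉ U,
        swingCount q (fun T : Finset β => ∑ x ∈ T, u x + ∑ y ∈ U, g y) (g r) := by
  rw [eta_eq_card_notMem, card_equiv sumEquiv.toEquiv (t := {p : Finset β × Finset γ |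
    r ∉ p.2 ∧ ∑ x ∈ p.1, u x + ∑ y ∈ p.2, g y < q ∧ q ≤ ∑ x ∈ p.1, u x + ∑ y ∈ p.2, g y + g r})
    fun S => by simp [sum_sum_eq_sum_toLeft_add_sum_toRight]]
  rw [card_filter, ← univ_product_univ, sum_product_right, sum_filter]
  refine sum_congr rfl fun U _ => ?_
  split_ifs with hU <;> simp [hU, swingCount]

theorem filter_notMem_fin_two {r s : Fin 2} (h : r ≠ s) :
    ({U | r ∉ U} : Finset (Finset (Fin 2))) = {∅, {s}} := by
  fin_cases r <;> fin_cases s <;> first | exact absurd rfl h | decide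

theorem eta_sumElim_fin_two (q : ℕ) (u : β → ℕ) (g : Fin 2 → ℕ) {r s : Fin 2} (h : r ≠ s) :
    eta q (Sum.elim u g) (.inr r) =
      swingCount q (fun T : Finset β => ∑ x ∈ T, u x) (g r) +
        swingCount q (fun T : Finset β => ∑ x ∈ T, u x + g s) (g r) := by
  rw [eta_sumElim_inr, filter_notMem_fin_two h, sum_pair (by simp)]
  simp

theorem eta_sumElim_inr_zero_add_inr_one (q : ℕ) (u : β → ℕ) (g : Fin 2 → ℕ) :
    eta q (Sum.elim u g) (.inr 0) + eta q (Sum.elim u g) (.inr 1) =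
      2 * swingCount q (fun T : Finset β => ∑ x ∈ T, u x) (g 0 + g 1) := by
  rw [eta_sumElim_fin_two q u g zero_ne_one, eta_sumElim_fin_two q u g one_ne_zero, two_mul]
  nth_rw 2 [add_comm (g 0)]
  rw [← swingCount_add, ← swingCount_add]
  ring

theorem eta_eq_swingCount_subtype_ne (q : ℕ) (w : α → ℕ) (i : α) :
    eta q w i = swingCount q (fun T : Finset {x // x ≠ i} => ∑ x ∈ T, w x) (w i) := by
  let e := Equiv.sumCompl (· ≠ i)
  have hw : w ∘ e = Sum.elim (fun x : {x // x ≠ i} => w x) (fun x : {x // ¬x ≠ i} => w x) := by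
    ext (x | x) <;> rfl
  have hU : ({U | (⟨i, not_not.2 rfl⟩ : {x // ¬x ≠ i}) ∉ U} : Finset (Finset _)) = {∅} := by
    ext U
    simp only [mem_filter, mem_univ, true_and, mem_singleton, eq_empty_iff_forall_notMem]
    exact ⟨fun h ⟨x, hx⟩ => by obtain rfl := not_not.1 hx; exact h, fun h => h _⟩
  rw [← show e (.inr ⟨i, not_not.2 rfl⟩) = i from rfl, ← eta_comp_equiv, hw, eta_sumElim_inr, hU,
    sum_singleton]
  simp only [sum_empty, add_zero]
  rfl

theorem eta_le_eta_of_sum_fiber_eq (q : ℕ) {w : α → ℕ} {w' : β → ℕ} {π : β → α}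
    (hπ : Function.Surjective π) (hw : ∀ k, ∑ j with π j = k, w' j = w k) {k : α} {k' : β}
    (hk : ∀ j, π j = k ↔ j = k') :
    eta q w k ≤ eta q w' k' := by
  have hsum : ∀ S : Finset α, ∑ j with π j ∈ S, w' j = ∑ x ∈ S, w x := fun S => by
    rw [← sum_fiberwise_of_maps_to (g := π) (t := S) fun j hj => (mem_filter.1 hj).2]
    refine sum_congr rfl fun x hx => ?_
    rw [← hw, filter_filter]
    congr 1
    ext j
    simp only [mem_filter, mem_univ, true_and]
    exact ⟨And.right, fun h => ⟨h ▸ hx, h⟩⟩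
  have herase : ∀ S : Finset α,
      ({j | π j ∈ S.erase k} : Finset β) = ({j | π j ∈ S} : Finset β).erase k' :=
    fun S => by ext j; simp [hk]
  refine card_le_card_of_injOn (fun S => ({j | π j ∈ S} : Finset β)) (fun S hS => ?_)
    (fun S₁ _ S₂ _ h => ?_)
  · simp only [mem_coe, mem_filter, mem_univ, true_and] at hS ⊢
    unfold winning at *
    rw [← herase, hsum, hsum, (hk k').2 rfl]
    exact hS
  · ext x
    obtain ⟨j, rfl⟩ := hπ x
    simpa using congrArg (j ∈ ·) h

end Swings

section Split

variable {α : Type*} [Fintype α] [DecidableEq α] {q : ℕ} {w : α → ℕ} {i : α} {g : Fin 2 → ℕ}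

theorem eta_split_inr_zero_add_inr_one (hg : g 0 + g 1 = w i) :
    eta q (Sum.elim (fun x : {x // x ≠ i} => w x) g) (.inr 0) +
      eta q (Sum.elim (fun x : {x // x ≠ i} => w x) g) (.inr 1) = 2 * eta q w i := by
  rw [eta_sumElim_inr_zero_add_inr_one, hg, eta_eq_swingCount_subtype_ne]

theorem eta_le_eta_split_inl (hg : g 0 + g 1 = w i) (k : {x // x ≠ i}) :
    eta q w k ≤ eta q (Sum.elim (fun x : {x // x ≠ i} => w x) g) (.inl k) := by
  let π : {x // x ≠ i} ⊕ Fin 2 → α := Sum.elim Subtype.val fun _ => i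
  have hπ : Function.Surjective π := fun x => by
    by_cases hx : x = i
    · exact ⟨.inr 0, hx.symm⟩
    · exact ⟨.inl ⟨x, hx⟩, rfl⟩
  refine eta_le_eta_of_sum_fiber_eq q hπ (fun x => ?_) fun j => ?_
  · by_cases hx : x = i
    · subst hx
      have hfiber : ({j | π j = x} : Finset _) = {.inr 0, .inr 1} := by
        ext (j | j)
        · simpa [π] using j.2
        · fin_cases j <;> simp [π]
      rw [hfiber, sum_pair (by simp)]
      exact hg
    · have hfiber : ({j | π j = x} : Finset _) = {.inl ⟨x, hx⟩} := by
        ext (j | j)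
        · simp [π, Subtype.ext_iff]
        · simp [π, Ne.symm hx]
      rw [hfiber, sum_singleton]
      rfl
  · rcases j with j | j
    · exact Subtype.ext_iff.symm.trans Sum.inl_injective.eq_iff.symm
    · exact ⟨fun h => absurd h.symm k.2, fun h => Sum.inr_ne_inl h |>.elim⟩

theorem totalEta_le_totalEta_split (hg : g 0 + g 1 = w i) :
    totalEta q w ≤ totalEta q (Sum.elim (fun x : {x // x ≠ i} => w x) g) := by
  rw [totalEta, totalEta, Fintype.sum_eq_add_sum_subtype_ne _ i, Fintype.sum_sum_type,
    Fin.sum_univ_two, add_comm (eta q w i), eta_split_inr_zero_add_inr_one hg]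
  gcongr with k
  · exact eta_le_eta_split_inl hg k
  · omega

end Split

theorem split_banzhaf_le_two_mul_general
    (α : Type*) [Fintype α] [DecidableEq α]
    (q : ℕ) (w : α → ℕ) (i : α) (a b : ℕ)
    (hab : a + b = w i)
    (w' : {x : α // x ≠ i} ⊕ Fin 2 → ℕ)
    (hw' : w' = Sum.elim (fun x : {x : α // x ≠ i} => w x.1) ![a, b]) :
    banzhaf q w' (Sum.inr 0) + banzhaf q w' (Sum.inr 1) ≤ 2 * banzhaf q w i := by
  subst hw'
  have hg : ![a, b] 0 + ![a, b] 1 = w i := hab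
  have hη : eta q w i ≤ totalEta q w := single_le_sum (fun _ _ => Nat.zero_le _) (mem_univ i)
  rw [banzhaf, banzhaf, banzhaf, ← add_div, ← Nat.cast_add, eta_split_inr_zero_add_inr_one hg,
    mul_div_assoc', Nat.cast_mul, Nat.cast_two]
  rcases (totalEta q w).eq_zero_or_pos with h0 | hpos
  · simp [Nat.eq_zero_of_le_zero (h0 ▸ hη)]
  · gcongr
    exact totalEta_le_totalEta_split hg

/-- If player `i` splits into two players of positive weights summing to `w i`,
the sum of the Banzhaf indices of the two sub-players is at most twice
the Banzhaf index of `i` in the original game. -/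
theorem split_banzhaf_le_two_mul
    (α : Type*) [Fintype α] [DecidableEq α]
    (q : ℕ) (w : α → ℕ) (i : α) (a b : ℕ) (ha : 0 < a) (hb : 0 < b)
    (hab : a + b = w i) (htot : 0 < totalEta q w)
    (w' : {x : α // x ≠ i} ⊕ Fin 2 → ℕ)
    (hw' : w' = Sum.elim (fun x : {x : α // x ≠ i} => w x.1) ![a, b]) :
    banzhaf q w' (Sum.inr 0) + banzhaf q w' (Sum.inr 1) ≤ 2 * banzhaf q w i :=
  split_banzhaf_le_two_mul_general α q w i a b hab w' hw'
end

section
/- Let A = {a_1,...,a_k} be positive integers and consider the WVG v = [q; 8a_1,...,8a_k, 2] with quota q = 4·Σa_i + 2. If no subset of A sums to (Σa_i)/2 (i.e., A is a 'no' instance of PARTITION), then the last player (weight 2) is a dummy in v, and if that player splits into two players of weight 1 each, both sub-players are dummies in the resulting game. -/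
open scoped Classical

lemma eta_eq_zero_of_forall_notMem {α : Type*} [Fintype α] [DecidableEq α]
    {q : ℕ} {w : α → ℕ} {i : α}
    (h : ∀ T : Finset α, i ∉ T → winning q w (insert i T) → winning q w T) :
    eta q w i = 0 := by
  rw [eta, Finset.card_eq_zero, Finset.filter_eq_empty_iff]
  rintro S - ⟨hiS, hwin, hlose⟩
  rw [← Finset.insert_erase hiS] at hwin
  exact hlose (h _ (Finset.notMem_erase i S) hwin)

/- The heavy players of a coalition weigh `8 L`; a light player is pivotal only if
`8 L ≤ 4 Σ a_i + 1 < 8 L + 2`, i.e. `8 L = 4 Σ a_i`, a partition of `a`. -/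
lemma eta_inr_eq_zero_of_not_partition {ι β : Type*} [Fintype ι] [DecidableEq ι] [Fintype β]
    [DecidableEq β] (a : ι → ℕ) (hno : ∀ P : Finset ι, 2 * ∑ i ∈ P, a i ≠ ∑ i, a i)
    (g : β → ℕ) (hg : ∑ b, g b ≤ 2) (b : β) :
    eta (4 * ∑ i, a i + 2) (Sum.elim (fun i => 8 * a i) g) (Sum.inr b) = 0 := by
  refine eta_eq_zero_of_forall_notMem fun T hbT hwin => ?_
  have hbR : b ∉ T.toRight := by rwa [Finset.mem_toRight]
  have hlight : g b + ∑ c ∈ T.toRight, g c ≤ 2 := by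
    rw [← Finset.sum_insert hbR]
    exact (Finset.sum_le_univ_sum_of_nonneg fun _ => Nat.zero_le _).trans hg
  have hpart := hno T.toLeft
  simp only [winning, Finset.sum_sum_eq_sum_toLeft_add_sum_toRight, Finset.toLeft_insert_inr,
    Finset.toRight_insert_inr, Finset.sum_insert hbR, Sum.elim_inl, Sum.elim_inr,
    ← Finset.mul_sum] at hwin ⊢
  omega

theorem partition_no_instance_dummy_general (k : ℕ) (a : Fin k → ℕ)
    (hno : ∀ P : Finset (Fin k), 2 * ∑ i ∈ P, a i ≠ ∑ i, a i)
    (q : ℕ) (hq : q = 4 * ∑ i, a i + 2)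
    (w : Fin k ⊕ Unit → ℕ)
    (hw : w = Sum.elim (fun i => 8 * a i) (fun _ => 2))
    (w' : Fin k ⊕ Fin 2 → ℕ)
    (hw' : w' = Sum.elim (fun i => 8 * a i) (fun _ => 1)) :
    eta q w (Sum.inr ()) = 0 ∧ (∀ j : Fin 2, eta q w' (Sum.inr j) = 0) := by
  subst hq hw hw'
  exact ⟨eta_inr_eq_zero_of_not_partition a hno _ (by simp) (),
    eta_inr_eq_zero_of_not_partition a hno _ (by simp)⟩

/-- NO-instance of PARTITION: with weights `8a_1, ..., 8a_k, 2` and quota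
`4·Σa_i + 2`, if no subset of `A` sums to half of `Σa_i`, then the weight-2
player is a dummy, and after splitting it into two weight-1 players both
sub-players are dummies. -/
theorem partition_no_instance_dummy (k : ℕ) (a : Fin k → ℕ) (ha : ∀ i, 0 < a i)
    (hno : ∀ P : Finset (Fin k), 2 * ∑ i ∈ P, a i ≠ ∑ i, a i)
    (q : ℕ) (hq : q = 4 * ∑ i, a i + 2)
    (w : Fin k ⊕ Unit → ℕ)
    (hw : w = Sum.elim (fun i => 8 * a i) (fun _ => 2))
    (w' : Fin k ⊕ Fin 2 → ℕ)
    (hw' : w' = Sum.elim (fun i => 8 * a i) (fun _ => 1)) :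
    eta q w (Sum.inr ()) = 0 ∧ (∀ j : Fin 2, eta q w' (Sum.inr j) = 0) :=
  partition_no_instance_dummy_general k a hno q hq w hw w' hw'
end
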